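/- Let A, B be n×n positive definite complex matrices and let s, t satisfy either 1 ≥ t ≥ s > 1/2 or 0 ≤ t ≤ s < 1/2. Then A^s ⊗ B^{1−s} + A^{1−s} ⊗ B^s + ((t − s)/(s − 1/2)) · (A^s ⊗ B^{1−s} + A^{1−s} ⊗ B^s − 2 (A^{1/2} ⊗ B^{1/2})) ≤ A^t ⊗ B^{1−t} + A^{1−t} ⊗ B^t, where ≤ is the Loewner order on n²×n² Hermitian matrices. -/

import Mathlib

/-!
Diagonalize `A = U diag(α) U*` and `B = V diag(β) V*`. Every term `A^x ⊗ B^y` of the inequality is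
then conjugated by the same unitary `U ⊗ V` from a diagonal matrix with entries `α_i^x β_j^y`,
so the inequality reduces to the scalar one for each pair of eigenvalues `a = α_i`, `b = β_j`.
That scalar inequality says that the convex function `x ↦ a^x b^(1-x) + a^(1-x) b^x` lies above
its secant through `1/2` and `s`, extended beyond `s`.
-/

open Matrix Kronecker
open scoped ComplexOrder

/-- Real power `A^r` of a positive definite matrix, via the (continuous)
functional calculus on selfadjoint matrices. -/
noncomputable def mpow {d : ℕ} (A : Matrix (Fin d) (Fin d) ℂ) (r : ℝ) :
    Matrix (Fin d) (Fin d) ℂ :=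
  cfc (fun x : ℝ => x ^ r) A

section Convex

variable {𝕜 : Type*} [Field 𝕜] [LinearOrder 𝕜] [IsStrictOrderedRing 𝕜] {s : Set 𝕜} {f : 𝕜 → 𝕜}

theorem ConvexOn.secant_extension_le_right (hf : ConvexOn 𝕜 s f) {x y z : 𝕜} (hx : x ∈ s)
    (hz : z ∈ s) (hxy : x < y) (hyz : y ≤ z) :
    f y + (z - y) / (y - x) * (f y - f x) ≤ f z := by
  rcases hyz.eq_or_lt with rfl | hyz
  · simp
  have hslope := hf.slope_mono_adjacent hx hz hxy hyz
  rw [div_le_div_iff₀ (sub_pos.2 hxy) (sub_pos.2 hyz)] at hslope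
  rw [div_mul_eq_mul_div, ← le_sub_iff_add_le', div_le_iff₀ (sub_pos.2 hxy)]
  linarith

theorem ConvexOn.secant_extension_le_left (hf : ConvexOn 𝕜 s f) {x y z : 𝕜} (hx : x ∈ s)
    (hz : z ∈ s) (hyx : y < x) (hzy : z ≤ y) :
    f y + (z - y) / (y - x) * (f y - f x) ≤ f z := by
  rcases hzy.eq_or_lt with rfl | hzy
  · simp
  have hslope := hf.slope_mono_adjacent hz hx hzy hyx
  rw [div_le_div_iff₀ (sub_pos.2 hzy) (sub_pos.2 hyx)] at hslope
  rw [div_mul_eq_mul_div, ← le_sub_iff_add_le', div_le_iff_of_neg (sub_neg.2 hyx)]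
  linarith

end Convex

section Heinz

/-- Twice the Heinz mean of `a` and `b`. -/
noncomputable def heinzSum (a b x : ℝ) : ℝ := a ^ x * b ^ (1 - x) + a ^ (1 - x) * b ^ x

variable {a b : ℝ}

theorem heinzSum_half :
    heinzSum a b (1 / 2) = 2 * (a ^ (1 / 2 : ℝ) * b ^ (1 / 2 : ℝ)) := by
  norm_num [heinzSum]; ring

theorem convexOn_heinzSum (ha : 0 < a) (hb : 0 < b) : ConvexOn ℝ Set.univ (heinzSum a b) := by
  have hrpow (c d : ℝ) (hc : 0 < c) (hd : 0 < d) (x : ℝ) : c ^ x * d ^ (1 - x) = d * (c / d) ^ x := by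
    rw [Real.div_rpow hc.le hd.le, Real.rpow_sub hd, Real.rpow_one]; ring
  refine (((convexOn_rpow_left (div_pos ha hb)).smul hb.le).add
    ((convexOn_rpow_left (div_pos hb ha)).smul ha.le)).congr fun x _ => ?_
  rw [heinzSum, mul_comm (a ^ (1 - x)), hrpow a b ha hb, hrpow b a hb ha]
  rfl

theorem heinzSum_extrapolation_le (ha : 0 < a) (hb : 0 < b) {s t : ℝ}
    (hst : (1 / 2 < s ∧ s ≤ t) ∨ (t ≤ s ∧ s < 1 / 2)) :
    heinzSum a b s + (t - s) / (s - 1 / 2) * (heinzSum a b s - heinzSum a b (1 / 2)) ≤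
      heinzSum a b t := by
  have hconv := convexOn_heinzSum ha hb
  rcases hst with ⟨hs, hst⟩ | ⟨hts, hs⟩
  · exact hconv.secant_extension_le_right trivial trivial hs hst
  · exact hconv.secant_extension_le_left trivial trivial hs hts

end Heinz

namespace Matrix

variable {n 𝕜 : Type*} [RCLike 𝕜] [Fintype n] [DecidableEq n]

noncomputable def conjDiagonal (W : Matrix n n 𝕜) : (n → ℝ) →ₗ[ℝ] Matrix n n 𝕜 where
  toFun g := W * diagonal (fun i => (g i : 𝕜)) * Wᴴ
  map_add' g h := by simp [← diagonal_add, Matrix.mul_add, Matrix.add_mul]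
  map_smul' c g := by
    have : (fun i => ((c • g) i : 𝕜)) = c • fun i => (g i : 𝕜) := by
      ext i; simp [RCLike.real_smul_eq_coe_mul]
    simp only [this, diagonal_smul, Matrix.mul_smul, Matrix.smul_mul, RingHom.id_apply]

theorem posSemidef_conjDiagonal (W : Matrix n n 𝕜) {g : n → ℝ} (hg : 0 ≤ g) :
    (conjDiagonal W g).PosSemidef :=
  (posSemidef_diagonal_iff.2 fun i => RCLike.ofReal_nonneg.2 (hg i)).mul_mul_conjTranspose_same W

theorem IsHermitian.cfc_kronecker_cfc {m : Type*} [Fintype m] [DecidableEq m]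
    {A : Matrix n n 𝕜} {B : Matrix m m 𝕜} (hA : A.IsHermitian) (hB : B.IsHermitian)
    (f g : ℝ → ℝ) :
    cfc f A ⊗ₖ cfc g B = conjDiagonal
      ((hA.eigenvectorUnitary : Matrix n n 𝕜) ⊗ₖ (hB.eigenvectorUnitary : Matrix m m 𝕜))
      (fun p => f (hA.eigenvalues p.1) * g (hB.eigenvalues p.2)) := by
  rw [hA.cfc_eq, hB.cfc_eq, IsHermitian.cfc, IsHermitian.cfc, Unitary.conjStarAlgAut_apply,
    Unitary.conjStarAlgAut_apply, mul_kronecker_mul, mul_kronecker_mul, diagonal_kronecker_diagonal]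
  simp only [conjDiagonal, LinearMap.coe_mk, AddHom.coe_mk, conjTranspose_kronecker,
    RCLike.ofReal_mul, Function.comp_apply]
  rfl

end Matrix

/-- For positive definite matrices `A, B` and `1 ≥ t ≥ s > 1/2` or `0 ≤ t ≤ s < 1/2`:
`A^s ⊗ B^{1−s} + A^{1−s} ⊗ B^s + ((t−s)/(s−1/2))(A^s ⊗ B^{1−s} + A^{1−s} ⊗ B^s − 2A^{1/2} ⊗ B^{1/2})
  ≤ A^t ⊗ B^{1−t} + A^{1−t} ⊗ B^t` in the Loewner order. -/
theorem kronecker_power_refinement {d : ℕ}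
    (A B : Matrix (Fin d) (Fin d) ℂ) (hA : A.PosDef) (hB : B.PosDef)
    (s t : ℝ)
    (hst : (1 ≥ t ∧ t ≥ s ∧ s > 1/2) ∨ (0 ≤ t ∧ t ≤ s ∧ s < 1/2)) :
    ((mpow A t ⊗ₖ mpow B (1 - t) + mpow A (1 - t) ⊗ₖ mpow B t) -
      (mpow A s ⊗ₖ mpow B (1 - s) + mpow A (1 - s) ⊗ₖ mpow B s +
        ((t - s) / (s - 1/2)) •
          (mpow A s ⊗ₖ mpow B (1 - s) + mpow A (1 - s) ⊗ₖ mpow B s -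
            (2 : ℝ) • (mpow A (1/2) ⊗ₖ mpow B (1/2))))).PosSemidef := by
  have hk (x y : ℝ) : mpow A x ⊗ₖ mpow B y = conjDiagonal
      ((hA.1.eigenvectorUnitary : Matrix _ _ ℂ) ⊗ₖ (hB.1.eigenvectorUnitary : Matrix _ _ ℂ))
      (fun p => hA.1.eigenvalues p.1 ^ x * hB.1.eigenvalues p.2 ^ y) :=
    hA.1.cfc_kronecker_cfc hB.1 _ _
  simp only [hk, ← map_add, ← map_smul, ← map_sub]
  refine posSemidef_conjDiagonal _ fun p => ?_
  have hst' : (1 / 2 < s ∧ s ≤ t) ∨ (t ≤ s ∧ s < 1 / 2) := by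
    rcases hst with ⟨-, hts, hs⟩ | ⟨-, hts, hs⟩
    exacts [.inl ⟨hs, hts⟩, .inr ⟨hts, hs⟩]
  have hpair := heinzSum_extrapolation_le (hA.eigenvalues_pos p.1) (hB.eigenvalues_pos p.2) hst'
  rw [heinzSum_half] at hpair
  simp only [heinzSum] at hpair
  simp only [Pi.sub_apply, Pi.add_apply, Pi.smul_apply, smul_eq_mul, Pi.zero_apply]
  linarith
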